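/- Let C(s) := Σ_{j∈ℕ} ⟨k⟩^{2s} / (⟨k-j⟩^{2s} ⟨j⟩^{2s}), where ⟨m⟩ := max(1,|m|). For s > 1/2, this sum is bounded uniformly in k ∈ ℕ: there is a constant C depending only on s with Σ_{j∈ℕ} ⟨k⟩^{2s} / (⟨k-j⟩^{2s} ⟨j⟩^{2s}) ≤ C for all k. -/

import Mathlib

/-!
Since `⟨k⟩ ≤ 2 max(⟨k - j⟩, ⟨j⟩)`, the `j`-th term is at most `2^{2s} (⟨k - j⟩^{-2s} + ⟨j⟩^{-2s})`.
As `j` runs over `ℕ`, both `k - j` and `j` run injectively through `ℤ`, so the sum is at most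
`2^{2s} · 2 Σ_{m ∈ ℤ} ⟨m⟩^{-2s}`, which is finite because `2s > 1`.
-/

open Real

/-- The Japanese bracket `⟨x⟩`. -/
def bracket (x : ℝ) : ℝ := max 1 |x|

lemma one_le_bracket (x : ℝ) : 1 ≤ bracket x := le_max_left _ _

lemma bracket_pos (x : ℝ) : 0 < bracket x := one_pos.trans_le (one_le_bracket x)

lemma bracket_add_le_two_mul_max (x y : ℝ) :
    bracket (x + y) ≤ 2 * max (bracket x) (bracket y) := by
  have hx : |x| ≤ max (bracket x) (bracket y) := (le_max_right _ _).trans (le_max_left _ _)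
  have hy : |y| ≤ max (bracket x) (bracket y) := (le_max_right _ _).trans (le_max_right _ _)
  have h1 : 1 ≤ max (bracket x) (bracket y) := (one_le_bracket x).trans (le_max_left _ _)
  exact max_le (by linarith) (by linarith [abs_add_le x y])

/-- Peetre's inequality in dimension one. -/
lemma bracket_add_rpow_le {p : ℝ} (hp : 0 ≤ p) (x y : ℝ) :
    bracket (x + y) ^ p ≤ 2 ^ p * (bracket x ^ p + bracket y ^ p) := by
  have hmax : max (bracket x) (bracket y) ^ p ≤ bracket x ^ p + bracket y ^ p := by
    have hx := rpow_nonneg (bracket_pos x).le p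
    have hy := rpow_nonneg (bracket_pos y).le p
    rcases max_cases (bracket x) (bracket y) with ⟨h, _⟩ | ⟨h, _⟩ <;> rw [h] <;> linarith
  calc bracket (x + y) ^ p ≤ (2 * max (bracket x) (bracket y)) ^ p :=
        rpow_le_rpow (bracket_pos _).le (bracket_add_le_two_mul_max x y) hp
    _ = 2 ^ p * max (bracket x) (bracket y) ^ p :=
        mul_rpow zero_le_two ((bracket_pos x).le.trans (le_max_left _ _))
    _ ≤ 2 ^ p * (bracket x ^ p + bracket y ^ p) := by gcongr

lemma bracket_add_rpow_div_le {p : ℝ} (hp : 0 ≤ p) (x y : ℝ) :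
    bracket (x + y) ^ p / (bracket x ^ p * bracket y ^ p) ≤
      2 ^ p * ((bracket x ^ p)⁻¹ + (bracket y ^ p)⁻¹) := by
  have hx := rpow_pos_of_pos (bracket_pos x) p
  have hy := rpow_pos_of_pos (bracket_pos y) p
  calc bracket (x + y) ^ p / (bracket x ^ p * bracket y ^ p)
      ≤ 2 ^ p * (bracket x ^ p + bracket y ^ p) / (bracket x ^ p * bracket y ^ p) := by
        gcongr; exact bracket_add_rpow_le hp x y
    _ = 2 ^ p * ((bracket x ^ p)⁻¹ + (bracket y ^ p)⁻¹) := by field_simp; ring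

lemma bracket_intCast_of_ne_zero {m : ℤ} (hm : m ≠ 0) : bracket m = |(m : ℝ)| :=
  max_eq_right (by exact_mod_cast Int.one_le_abs hm)

lemma summable_inv_bracket_intCast_rpow {p : ℝ} (hp : 1 < p) :
    Summable fun m : ℤ => (bracket m ^ p)⁻¹ := by
  refine (summable_abs_int_rpow hp).congr_cofinite ?_
  filter_upwards [(Set.finite_singleton (0 : ℤ)).compl_mem_cofinite] with m hm
  rw [bracket_intCast_of_ne_zero hm, rpow_neg (abs_nonneg _)]

lemma sub_natCast_injective (k : ℤ) : Function.Injective fun j : ℕ => k - j :=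
  fun a b h => by simpa using h

lemma summable_comp_sub_add {f : ℤ → ℝ} (hf : Summable f) (k : ℤ) :
    Summable fun j : ℕ => f (k - j) + f j :=
  (hf.comp_injective (sub_natCast_injective k)).add (hf.comp_injective Nat.cast_injective)

lemma tsum_comp_sub_add_le {f : ℤ → ℝ} (hf : Summable f) (hf₀ : ∀ m, 0 ≤ f m) (k : ℤ) :
    ∑' j : ℕ, (f (k - j) + f j) ≤ 2 * ∑' m, f m := by
  have h₁ : Summable fun j : ℕ => f (k - j) := hf.comp_injective (sub_natCast_injective k)
  have h₂ : Summable fun j : ℕ => f j := hf.comp_injective Nat.cast_injective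
  rw [h₁.tsum_add h₂, two_mul]
  exact add_le_add (tsum_comp_le_tsum_of_inj hf hf₀ (sub_natCast_injective k))
    (tsum_comp_le_tsum_of_inj hf hf₀ Nat.cast_injective)

/-- Uniform bound in `k` for the convolution-type sum
`Σ_j ⟨k⟩^{2s} / (⟨k-j⟩^{2s} ⟨j⟩^{2s})` when `s > 1/2`. -/
theorem convolution_weight_sum_bounded (s : ℝ) (hs : 1 / 2 < s) :
    ∃ C : ℝ, ∀ k : ℕ,
      (∑' j : ℕ,
        (max 1 |((k : ℝ))|) ^ (2 * s) /
          ((max 1 |(((k : ℤ) - (j : ℤ) : ℤ) : ℝ)|) ^ (2 * s) *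
            (max 1 |((j : ℝ))|) ^ (2 * s))) ≤ C := by
  set p := 2 * s
  set f : ℤ → ℝ := fun m => (bracket m ^ p)⁻¹
  have hp : 1 < p := by linarith
  have hf : Summable f := summable_inv_bracket_intCast_rpow hp
  have hf₀ : ∀ m, 0 ≤ f m := fun m => inv_nonneg.2 (rpow_nonneg (bracket_pos _).le p)
  refine ⟨2 ^ p * (2 * ∑' m, f m), fun k => ?_⟩
  have hterm : ∀ j : ℕ, bracket k ^ p / (bracket ((k : ℤ) - j : ℤ) ^ p * bracket j ^ p) ≤
      2 ^ p * (f (k - j) + f j) := fun j => by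
    have hk : (k : ℝ) = ((k - j : ℤ) : ℝ) + j := by push_cast; ring
    simpa [f, ← hk] using bracket_add_rpow_div_le (by linarith) ((k - j : ℤ) : ℝ) j
  have hg : Summable fun j : ℕ => 2 ^ p * (f (k - j) + f j) :=
    (summable_comp_sub_add hf k).mul_left _
  refine (Summable.tsum_le_tsum hterm
    (hg.of_nonneg_of_le (fun j => by unfold bracket; positivity) hterm) hg).trans ?_
  rw [tsum_mul_left]
  gcongr
  exact tsum_comp_sub_add_le hf hf₀ k
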